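/- Let d ≥ 1 and let A : (Fin d → Fin n) → ℝ be an order-d dimension-n tensor each of whose entries is 0 or 1, and suppose that exactly t multi-indices x satisfy A x = 0. Then per(A) ≥ ((n^(d-1) : ℤ) - t) * ((n-1)!)^(d-1), where the right-hand side is understood as a real number via casting. -/

import Mathlib

/-- The permanent (1-permanent) of an order-`d` dimension-`n` tensor:
the sum over all families `π : Fin d → Equiv.Perm (Fin n)` with `π 0 = 1`
of the products of the corresponding diagonal entries. -/
noncomputable def tensorPer {d n : ℕ} (hd : 1 ≤ d) (A : (Fin d → Fin n) → ℝ) : ℝ :=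
  ∑ π ∈ Finset.univ.filter (fun π : Fin d → Equiv.Perm (Fin n) => π ⟨0, hd⟩ = 1),
    ∏ i : Fin n, A (fun k => π k i)

/-!
For a (0,1)-tensor, `per A` counts the families `π` with `π 0 = 1` all of whose diagonals
`i ↦ (π k i)_k` avoid the zero entries. There are `(n!)^(d-1)` families in total, and a given
multi-index `x` lies on a diagonal of exactly `((n-1)!)^(d-1)` of them (the diagonal must be the
one through `x 0`, and each `π k` must send `x 0` to `x k`). A union bound over the `t` zeros
then gives `per A ≥ (n!)^(d-1) - t ((n-1)!)^(d-1) ≥ (n^(d-1) - t) ((n-1)!)^(d-1)`.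
-/

open Finset Equiv
open scoped Nat

lemma mul_factorial_pred_le (n : ℕ) : n * (n - 1)! ≤ n ! := by
  rcases n with _ | n
  · simp
  · exact (Nat.mul_factorial_pred n.succ_ne_zero).le

section Counting

variable {ι α β : Type*} [Fintype ι] [DecidableEq ι] [Fintype α] [DecidableEq α]

/-- Left multiplication by `swap a b` carries this fibre onto the stabiliser of `a`, that is,
onto `Perm {x // x ≠ a}`. -/
theorem card_filter_perm_apply_eq (a b : α) :
    #{σ : Perm α | σ a = b} = (Fintype.card α - 1)! := by
  have toStabilizer : {σ : Perm α // σ a = b} ≃ {σ : Perm α // ∀ x, ¬x ≠ a → σ x = x} :=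
    (Equiv.mulLeft (swap a b)).subtypeEquiv fun σ => by
      simp [Perm.mul_apply, swap_apply_eq_iff]
  rw [← Fintype.card_subtype,
    Fintype.card_congr (toStabilizer.trans (Perm.subtypeEquivSubtypePerm _).symm),
    Fintype.card_perm, Fintype.card_subtype_compl, Fintype.card_subtype_eq]

theorem card_piFinset_update_singleton (s : ι → Finset β) (i : ι) (b : β) {c : ℕ}
    (hs : ∀ k, #(s k) = c) :
    #(Fintype.piFinset (Function.update s i {b})) = c ^ (Fintype.card ι - 1) := by
  rw [Fintype.card_piFinset, Fintype.prod_eq_mul_prod_compl i]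
  rw [prod_congr rfl fun k hk => by rw [Function.update_of_ne (by simpa using hk), hs]]
  simp [card_compl]

theorem card_filter_apply_eq_one (i₀ : ι) :
    #{π : ι → Perm α | π i₀ = 1} = (Fintype.card α)! ^ (Fintype.card ι - 1) := by
  have : ({π : ι → Perm α | π i₀ = 1} : Finset _) =
      Fintype.piFinset (Function.update (fun _ => univ) i₀ {1}) := by
    ext π
    simp only [mem_filter, mem_univ, true_and, Fintype.mem_piFinset, Function.update_apply]
    exact ⟨fun h k => by split_ifs with hk <;> simp [hk, h], fun h => by simpa using h i₀⟩
  rw [this, card_piFinset_update_singleton _ _ _ fun _ => card_univ.trans (Fintype.card_perm)]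

theorem card_filter_apply_eq_one_and_apply_eq (i₀ : ι) (x : ι → α) :
    #{π : ι → Perm α | π i₀ = 1 ∧ ∀ k, π k (x i₀) = x k} =
      (Fintype.card α - 1)! ^ (Fintype.card ι - 1) := by
  have : ({π : ι → Perm α | π i₀ = 1 ∧ ∀ k, π k (x i₀) = x k} : Finset _) =
      Fintype.piFinset
        (Function.update (fun k => ({σ : Perm α | σ (x i₀) = x k} : Finset _)) i₀ {1}) := by
    ext π
    simp only [mem_filter, mem_univ, true_and, Fintype.mem_piFinset, Function.update_apply]
    refine ⟨fun ⟨h, hx⟩ k => by split_ifs with hk <;> simp [hk, h, hx], fun h => ?_⟩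
    have h₀ : π i₀ = 1 := by simpa using h i₀
    refine ⟨h₀, fun k => ?_⟩
    by_cases hk : k = i₀
    · simp [hk, h₀]
    · simpa [hk] using h k
  rw [this, card_piFinset_update_singleton _ _ _ fun _ => card_filter_perm_apply_eq _ _]

theorem card_filter_apply_eq_one_and_mem_le (i₀ : ι) (Z : Finset (ι → α)) :
    #{π : ι → Perm α | π i₀ = 1 ∧ ∃ a, (fun k => π k a) ∈ Z} ≤
      #Z * (Fintype.card α - 1)! ^ (Fintype.card ι - 1) := by
  calc _ ≤ #(Z.biUnion fun x =>
          {π : ι → Perm α | π i₀ = 1 ∧ ∀ k, π k (x i₀) = x k}) := by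
        refine card_le_card fun π hπ => ?_
        obtain ⟨h₀, a, ha⟩ := (mem_filter.1 hπ).2
        refine mem_biUnion.2 ⟨_, ha, mem_filter.2 ⟨mem_univ _, h₀, fun k => ?_⟩⟩
        simp [h₀]
    _ ≤ _ := card_biUnion_le_card_mul _ _ _ fun x _ =>
        (card_filter_apply_eq_one_and_apply_eq i₀ x).le

theorem factorial_pow_le_card_filter_add (i₀ : ι) (Z : Finset (ι → α)) :
    (Fintype.card α)! ^ (Fintype.card ι - 1) ≤
      #{π : ι → Perm α | π i₀ = 1 ∧ ∀ a, (fun k => π k a) ∉ Z} +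
        #Z * (Fintype.card α - 1)! ^ (Fintype.card ι - 1) := by
  rw [← card_filter_apply_eq_one i₀,
    ← card_filter_add_card_filter_not (s := {π : ι → Perm α | π i₀ = 1})
      (fun π => ∀ a, (fun k => π k a) ∉ Z), filter_filter, filter_filter]
  gcongr
  simpa only [not_forall, not_not] using card_filter_apply_eq_one_and_mem_le i₀ Z

end Counting

theorem tensorPer_eq_card_filter {d n : ℕ} (hd : 1 ≤ d) (A : (Fin d → Fin n) → ℝ)
    (h01 : ∀ x, A x = 0 ∨ A x = 1) :
    tensorPer hd A =
      #{π : Fin d → Perm (Fin n) | π ⟨0, hd⟩ = 1 ∧ ∀ i, A (fun k => π k i) ≠ 0} := by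
  rw [tensorPer, ← filter_filter, card_filter, Nat.cast_sum]
  refine sum_congr rfl fun π _ => ?_
  split_ifs with h
  · rw [Nat.cast_one]
    exact prod_eq_one fun i _ => (h01 _).resolve_left (h i)
  · obtain ⟨i, hi⟩ := not_forall_not.1 h
    rw [Nat.cast_zero]
    exact prod_eq_zero (mem_univ i) hi

/-- Dow–Gibson: a lower bound for the permanent of a (0,1)-tensor of order `d` and
dimension `n` with exactly `t` zero entries. -/
theorem per_lower_bound_of_zeros {d n : ℕ} (hd : 1 ≤ d) (A : (Fin d → Fin n) → ℝ)
    (h01 : ∀ x, A x = 0 ∨ A x = 1) (t : ℕ)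
    (ht : t = (Finset.univ.filter (fun x : Fin d → Fin n => A x = 0)).card) :
    ((((n : ℤ) ^ (d - 1) - (t : ℤ)) * ((Nat.factorial (n - 1) : ℤ)) ^ (d - 1) : ℤ) : ℝ)
      ≤ tensorPer hd A := by
  have hcount := factorial_pow_le_card_filter_add (α := Fin n) (⟨0, hd⟩ : Fin d) {x | A x = 0}
  simp only [Fintype.card_fin, mem_filter, mem_univ, true_and, ← ht] at hcount
  have hfac : n ^ (d - 1) * (n - 1)! ^ (d - 1) ≤ n ! ^ (d - 1) := by
    rw [← mul_pow]
    exact Nat.pow_le_pow_left (mul_factorial_pred_le n) _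
  have := (Nat.cast_le (α := ℝ)).2 (hfac.trans hcount)
  push_cast at this ⊢
  rw [tensorPer_eq_card_filter hd A h01]
  linarith
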